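/- arXiv:math/0511349 — 3 statements merged into one kernel-verified Lean document; each statement's English description precedes it below -/
import Mathlib

section
/- Let p ≥ 1, let C be a p×p real matrix all of whose entries are strictly positive, let α > 0 and let v ∈ ℝ^p be a vector with all coordinates strictly positive satisfying C·v = α·v. Then every eigenvalue μ ∈ ℂ of the complexification of C (the matrix obtained by mapping each real entry of C into ℂ) with μ ≠ α satisfies |μ| < α; in other words, α is the unique eigenvalue of maximal modulus of C. -/
/-!
Let `w` be a complex eigenvector of `A` for `μ`. If `A ≥ 0` and `A v = α v` with `v > 0`, then
`‖μ‖ |w| ≤ A |w|` entrywise, and comparing `|w|` with `v` at an index maximising `|w i| / v i`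
gives `‖μ‖ ≤ α`. When the diagonal of `A` is positive, apply this to `A - ε • 1` for a small
`ε > 0`: then `‖μ - ε‖ ≤ α - ε`, a disc that touches the circle `‖z‖ = α` only at `α`.
-/

open Matrix Finset Filter Topology

theorem Matrix.exists_mulVec_eq_smul_of_isRoot_charpoly {K n : Type*} [Field K] [Fintype n]
    [DecidableEq n] {A : Matrix n n K} {μ : K} (h : A.charpoly.IsRoot μ) :
    ∃ w ≠ 0, A *ᵥ w = μ • w := by
  rw [← Matrix.charpoly_toLin', ← Module.End.hasEigenvalue_iff_isRoot_charpoly] at h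
  obtain ⟨w, hw⟩ := h.exists_hasEigenvector
  exact ⟨w, hw.2, by simpa using hw.apply_eq_smul⟩

theorem Complex.norm_lt_of_norm_sub_ofReal_le {ε α : ℝ} {μ : ℂ} (hε : 0 < ε)
    (h : ‖μ - ε‖ ≤ α - ε) (hμ : μ ≠ α) : ‖μ‖ < α := by
  have hle : ‖μ‖ ≤ α := by
    calc ‖μ‖ ≤ ‖μ - ε‖ + ‖(ε : ℂ)‖ := norm_le_norm_sub_add _ _
      _ ≤ α - ε + ε := by rw [Complex.norm_real, Real.norm_of_nonneg hε.le]; gcongr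
      _ = α := sub_add_cancel α ε
  refine hle.lt_of_ne fun heq => hμ ?_
  have hεα : ε ≤ α := sub_nonneg.1 ((norm_nonneg _).trans h)
  have hsub : ‖μ - ε‖ ^ 2 ≤ (α - ε) ^ 2 := pow_le_pow_left₀ (norm_nonneg _) h 2
  have hnorm : ‖μ‖ ^ 2 = α ^ 2 := by rw [heq]
  simp only [Complex.sq_norm, Complex.normSq_apply, Complex.sub_re, Complex.sub_im,
    Complex.ofReal_re, Complex.ofReal_im] at hsub hnorm
  have hre : α ≤ μ.re := by nlinarith
  have him : μ.im = 0 := by nlinarith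
  apply Complex.ext <;> simp only [Complex.ofReal_re, Complex.ofReal_im] <;> nlinarith

namespace Matrix

variable {n : Type*} [Fintype n] {A : Matrix n n ℝ} {v : n → ℝ} {α : ℝ}

theorem le_of_smul_le_mulVec (hA : ∀ i j, 0 ≤ A i j) (hv : ∀ i, 0 < v i) (hAv : A *ᵥ v = α • v)
    {x : n → ℝ} (hx₀ : 0 ≤ x) (hx : x ≠ 0) {r : ℝ} (hr : r • x ≤ A *ᵥ x) : r ≤ α := by
  obtain ⟨j, hj⟩ := Function.ne_iff.1 hx
  obtain ⟨i, -, hi⟩ := exists_max_image univ (fun i => x i / v i) ⟨j, mem_univ j⟩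
  set t := x i / v i
  have hxt : ∀ k, x k ≤ t * v k := fun k => (div_le_iff₀ (hv k)).1 (hi k (mem_univ k))
  have hxi : x i = t * v i := (div_mul_cancel₀ _ (hv i).ne').symm
  have hxi_pos : 0 < x i := by
    have ht : 0 < t := pos_of_mul_pos_left (((hx₀ j).lt_of_ne' hj).trans_le (hxt j)) (hv j).le
    rw [hxi]; exact mul_pos ht (hv i)
  refine le_of_mul_le_mul_right ?_ hxi_pos
  calc r * x i ≤ ∑ k, A i k * x k := hr i
    _ ≤ ∑ k, A i k * (t * v k) := sum_le_sum fun k _ => mul_le_mul_of_nonneg_left (hxt k) (hA i k)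
    _ = t * (A *ᵥ v) i := by simp only [mulVec, dotProduct, mul_sum, mul_left_comm]
    _ = α * x i := by rw [hAv, hxi, Pi.smul_apply, smul_eq_mul]; ring

theorem norm_smul_le_mulVec_norm (hA : ∀ i j, 0 ≤ A i j) {w : n → ℂ} {μ : ℂ}
    (h : A.map (algebraMap ℝ ℂ) *ᵥ w = μ • w) :
    ‖μ‖ • (fun i => ‖w i‖) ≤ A *ᵥ fun i => ‖w i‖ := fun i => by
  calc ‖μ‖ * ‖w i‖ = ‖∑ j, (A i j : ℂ) * w j‖ := by
        rw [← norm_mul, ← smul_eq_mul, ← Pi.smul_apply, ← h]; rfl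
    _ ≤ ∑ j, A i j * ‖w j‖ := by
        refine (norm_sum_le _ _).trans_eq (sum_congr rfl fun j _ => ?_)
        rw [norm_mul, Complex.norm_real, Real.norm_of_nonneg (hA i j)]

theorem norm_le_of_mulVec_eq_smul (hA : ∀ i j, 0 ≤ A i j) (hv : ∀ i, 0 < v i)
    (hAv : A *ᵥ v = α • v) {w : n → ℂ} (hw : w ≠ 0) {μ : ℂ}
    (h : A.map (algebraMap ℝ ℂ) *ᵥ w = μ • w) : ‖μ‖ ≤ α :=
  le_of_smul_le_mulVec hA hv hAv (fun i => norm_nonneg (w i))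
    (by simpa [funext_iff] using hw) (norm_smul_le_mulVec_norm hA h)

theorem norm_lt_of_mulVec_eq_smul [DecidableEq n] (hA : ∀ i j, 0 ≤ A i j)
    (hdiag : ∀ i, 0 < A i i) (hv : ∀ i, 0 < v i) (hAv : A *ᵥ v = α • v) {w : n → ℂ}
    (hw : w ≠ 0) {μ : ℂ} (h : A.map (algebraMap ℝ ℂ) *ᵥ w = μ • w) (hμ : μ ≠ α) :
    ‖μ‖ < α := by
  obtain ⟨ε, hεA, hε⟩ : ∃ ε, (∀ i, ε ≤ A i i) ∧ 0 < ε :=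
    ((eventually_all.2 fun i => (eventually_le_nhds (hdiag i)).filter_mono nhdsWithin_le_nhds).and
      self_mem_nhdsWithin).exists (f := 𝓝[>] (0 : ℝ))
  set B := A - ε • (1 : Matrix n n ℝ)
  have hB : ∀ i j, 0 ≤ B i j := by
    intro i j
    rcases eq_or_ne i j with rfl | hij
    · simpa [B] using hεA i
    · simpa [B, hij] using hA i j
  have hBv : B *ᵥ v = (α - ε) • v := by
    rw [sub_mulVec, smul_mulVec, one_mulVec, hAv, sub_smul]
  have hBw : B.map (algebraMap ℝ ℂ) *ᵥ w = (μ - ε) • w := by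
    rw [Matrix.map_sub, sub_mulVec, h, sub_smul, Matrix.map_smul, Matrix.map_one, smul_mulVec,
      one_mulVec]
    all_goals simp [Complex.real_smul]
  exact Complex.norm_lt_of_norm_sub_ofReal_le hε (norm_le_of_mulVec_eq_smul hB hv hBv hw hBw) hμ

end Matrix

theorem positive_matrix_eigenvalue_dominates_general
    (p : ℕ) (C : Matrix (Fin p) (Fin p) ℝ)
    (hC : ∀ i j, 0 < C i j)
    (α : ℝ) (v : Fin p → ℝ) (hv : ∀ i, 0 < v i)
    (heig : C.mulVec v = α • v) :
    ∀ μ : ℂ, ((C.map (algebraMap ℝ ℂ)).charpoly).IsRoot μ → μ ≠ (α : ℂ) →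
      ‖μ‖ < α := by
  intro μ hroot hμ
  obtain ⟨w, hw, hCw⟩ := exists_mulVec_eq_smul_of_isRoot_charpoly hroot
  exact norm_lt_of_mulVec_eq_smul (fun i j => (hC i j).le) (fun i => hC i i) hv heig hw hCw hμ

/-- **Perron–Frobenius: the positive eigenvalue dominates.** If `C` is a real
matrix with strictly positive entries, `α > 0` and `v` is a strictly positive
eigenvector with `C v = α v`, then every complex eigenvalue `μ ≠ α` of the
complexification of `C` (i.e. every root of its characteristic polynomial)
satisfies `|μ| < α`. -/
theorem positive_matrix_eigenvalue_dominates
    (p : ℕ) (hp : 1 ≤ p) (C : Matrix (Fin p) (Fin p) ℝ)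
    (hC : ∀ i j, 0 < C i j)
    (α : ℝ) (hα : 0 < α) (v : Fin p → ℝ) (hv : ∀ i, 0 < v i)
    (heig : C.mulVec v = α • v) :
    ∀ μ : ℂ, ((C.map (algebraMap ℝ ℂ)).charpoly).IsRoot μ → μ ≠ (α : ℂ) →
      ‖μ‖ < α :=
  positive_matrix_eigenvalue_dominates_general p C hC α v hv heig
end

section
/- Let p ≥ 1, let C be a p×p real matrix all of whose entries are strictly positive, let α > 0 and let v ∈ ℝ^p be a vector with all coordinates strictly positive satisfying C·v = α·v. Then: (1) the generalized eigenspace for the eigenvalue α of the complexification of C is one-dimensional; and (2) if w ∈ ℝ^p is a nonzero vector with all coordinates nonnegative and C·w = β·w for some real β, then β = α and w = t·v for some t > 0. In particular, up to a positive multiple, v is the unique eigenvector of C with nonnegative entries. -/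
section PFAux

variable {p : ℕ} (hp : 1 ≤ p) (C : Matrix (Fin p) (Fin p) ℝ)
  (hC : ∀ i j, 0 < C i j)

include hp hC

/-- Min-ratio comparison: if `a, b` are positive eigenvectors with eigenvalues
`γ, δ`, then either `a` is a positive multiple of `b` or `δ < γ`. -/
lemma pf_comp (γ δ : ℝ) (a b : Fin p → ℝ) (ha : ∀ i, 0 < a i) (hb : ∀ i, 0 < b i)
    (hCa : C.mulVec a = γ • a) (hCb : C.mulVec b = δ • b) :
    (∃ t : ℝ, 0 < t ∧ a = t • b) ∨ δ < γ := by
  obtain ⟨i0, -, hi0⟩ := Finset.exists_min_image Finset.univ (fun i => a i / b i)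
    ⟨⟨0, hp⟩, Finset.mem_univ _⟩
  set t : ℝ := a i0 / b i0 with ht
  have htpos : 0 < t := div_pos (ha i0) (hb i0)
  have hle : ∀ j, t * b j ≤ a j := by
    intro j
    have := hi0 j (Finset.mem_univ j)
    exact (le_div_iff₀ (hb j)).mp this
  have hi0eq : a i0 = t * b i0 := (div_mul_cancel₀ (a i0) (hb i0).ne').symm
  by_cases hall : ∀ j, a j = t * b j
  · exact Or.inl ⟨t, htpos, funext fun j => by simp [hall j, Pi.smul_apply, smul_eq_mul]⟩
  · push_neg at hall
    obtain ⟨j1, hj1⟩ := hall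
    have hsum : 0 < ∑ j, C i0 j * (a j - t * b j) := by
      apply Finset.sum_pos'
      · intro j _
        have := hle j
        have := (hC i0 j).le
        nlinarith [hle j, (hC i0 j).le]
      · exact ⟨j1, Finset.mem_univ _, mul_pos (hC i0 j1)
          (sub_pos.mpr (lt_of_le_of_ne (hle j1) (fun h => hj1 h.symm)))⟩
    have hCa0 : ∑ j, C i0 j * a j = γ * a i0 := by
      have := congrFun hCa i0
      simpa [Matrix.mulVec, dotProduct, Pi.smul_apply, smul_eq_mul] using this
    have hCb0 : ∑ j, C i0 j * b j = δ * b i0 := by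
      have := congrFun hCb i0
      simpa [Matrix.mulVec, dotProduct, Pi.smul_apply, smul_eq_mul] using this
    have hexp : ∑ j, C i0 j * (a j - t * b j)
        = γ * a i0 - t * (δ * b i0) := by
      rw [← hCa0, ← hCb0, Finset.mul_sum, ← Finset.sum_sub_distrib]
      exact Finset.sum_congr rfl fun j _ => by ring
    rw [hexp, hi0eq] at hsum
    right
    nlinarith [hb i0, htpos, mul_pos htpos (hb i0)]

/-- Any real eigenvector for the eigenvalue of a positive eigenvector is a
multiple of it. -/
lemma pf_real_eig (α : ℝ) (v : Fin p → ℝ) (hv : ∀ i, 0 < v i)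
    (heig : C.mulVec v = α • v) (x : Fin p → ℝ) (hx : C.mulVec x = α • x) :
    ∃ t : ℝ, x = t • v := by
  obtain ⟨i0, -, hi0⟩ := Finset.exists_min_image Finset.univ (fun i => x i / v i)
    ⟨⟨0, hp⟩, Finset.mem_univ _⟩
  set t : ℝ := x i0 / v i0 with ht
  have hle : ∀ j, t * v j ≤ x j := fun j =>
    (le_div_iff₀ (hv j)).mp (hi0 j (Finset.mem_univ j))
  have hi0eq : x i0 = t * v i0 := (div_mul_cancel₀ (x i0) (hv i0).ne').symm
  refine ⟨t, funext fun j => ?_⟩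
  have hCx0 : ∑ j, C i0 j * x j = α * x i0 := by
    have := congrFun hx i0
    simpa [Matrix.mulVec, dotProduct, Pi.smul_apply, smul_eq_mul] using this
  have hCv0 : ∑ j, C i0 j * v j = α * v i0 := by
    have := congrFun heig i0
    simpa [Matrix.mulVec, dotProduct, Pi.smul_apply, smul_eq_mul] using this
  have hzero : ∑ j, C i0 j * (x j - t * v j) = 0 := by
    have hsplit : ∑ j, C i0 j * (x j - t * v j)
        = (∑ j, C i0 j * x j) - t * ∑ j, C i0 j * v j := by
      rw [Finset.mul_sum, ← Finset.sum_sub_distrib]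
      exact Finset.sum_congr rfl fun j _ => by ring
    rw [hsplit, hCx0, hCv0, hi0eq]; ring
  have hall := (Finset.sum_eq_zero_iff_of_nonneg
    (fun j _ => mul_nonneg (hC i0 j).le (sub_nonneg.mpr (hle j)))).mp hzero
  have := hall j (Finset.mem_univ j)
  have hxj : x j - t * v j = 0 := by
    rcases mul_eq_zero.mp this with h | h
    · exact absurd h (hC i0 j).ne'
    · exact h
  simp [Pi.smul_apply, smul_eq_mul]
  linarith

/-- No generalized eigenvectors: `C u = α u + c v` forces `c = 0`. -/
lemma pf_no_gen (α : ℝ) (v : Fin p → ℝ) (hv : ∀ i, 0 < v i)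
    (heig : C.mulVec v = α • v) (u : Fin p → ℝ) (c : ℝ)
    (hu : C.mulVec u = α • u + c • v) : c = 0 := by
  have key : ∀ (u : Fin p → ℝ) (c : ℝ), C.mulVec u = α • u + c • v → c ≤ 0 := by
    intro u c hu
    obtain ⟨i0, -, hi0⟩ := Finset.exists_max_image Finset.univ (fun i => u i / v i)
      ⟨⟨0, hp⟩, Finset.mem_univ _⟩
    set t : ℝ := u i0 / v i0 with ht
    have hle : ∀ j, u j ≤ t * v j := fun j =>
      (div_le_iff₀ (hv j)).mp (hi0 j (Finset.mem_univ j))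
    have hi0eq : u i0 = t * v i0 := (div_mul_cancel₀ (u i0) (hv i0).ne').symm
    have hCu0 : ∑ j, C i0 j * u j = α * u i0 + c * v i0 := by
      have := congrFun hu i0
      simpa [Matrix.mulVec, dotProduct, Pi.smul_apply, smul_eq_mul] using this
    have hCv0 : ∑ j, C i0 j * v j = α * v i0 := by
      have := congrFun heig i0
      simpa [Matrix.mulVec, dotProduct, Pi.smul_apply, smul_eq_mul] using this
    have hmono : ∑ j, C i0 j * u j ≤ ∑ j, C i0 j * (t * v j) :=
      Finset.sum_le_sum fun j _ =>
        mul_le_mul_of_nonneg_left (hle j) (hC i0 j).le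
    have htv : ∑ j, C i0 j * (t * v j) = t * (α * v i0) := by
      rw [show (∑ j, C i0 j * (t * v j)) = t * ∑ j, C i0 j * v j by
        rw [Finset.mul_sum]; congr 1; funext j; ring, hCv0]
    rw [hCu0, htv, hi0eq] at hmono
    nlinarith [hv i0]
  have h1 := key u c hu
  have h2 : -c ≤ 0 := by
    apply key (-u) (-c)
    funext i
    have := congrFun hu i
    simp only [Matrix.mulVec, dotProduct, Pi.neg_apply, Pi.add_apply, Pi.smul_apply,
      smul_eq_mul, mul_neg, Finset.sum_neg_distrib] at this ⊢
    linarith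
  linarith

end PFAux

/-- **Perron–Frobenius: simplicity and uniqueness.** If `C` is a real matrix
with strictly positive entries, `α > 0` and `v` is a strictly positive vector
with `C v = α v`, then (1) the generalized eigenspace of the complexification
of `C` for the eigenvalue `α` is one-dimensional, and (2) every nonzero
nonnegative real eigenvector `w` of `C` (with `C w = β w`) has eigenvalue
`β = α` and is a positive multiple of `v`. -/
theorem positive_matrix_perron_frobenius_uniqueness
    (p : ℕ) (hp : 1 ≤ p) (C : Matrix (Fin p) (Fin p) ℝ)
    (hC : ∀ i j, 0 < C i j)
    (α : ℝ) (hα : 0 < α) (v : Fin p → ℝ) (hv : ∀ i, 0 < v i)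
    (heig : C.mulVec v = α • v) :
    (Module.finrank ℂ
        (Module.End.maxGenEigenspace
          (Matrix.toLin' (C.map (algebraMap ℝ ℂ))) (α : ℂ)) = 1) ∧
    (∀ (w : Fin p → ℝ) (β : ℝ), w ≠ 0 → (∀ i, 0 ≤ w i) →
      C.mulVec w = β • w → β = α ∧ ∃ t : ℝ, 0 < t ∧ w = t • v) := by
  set A : Matrix (Fin p) (Fin p) ℂ := C.map (algebraMap ℝ ℂ) with hA
  set v' : Fin p → ℂ := fun i => (v i : ℂ) with hv'
  -- component formula for the complexified matrix
  have hAmul : ∀ (z : Fin p → ℂ) (i : Fin p),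
      A.mulVec z i = ∑ j, (C i j : ℂ) * z j := by
    intro z i
    simp [hA, Matrix.mulVec, dotProduct, Matrix.map_apply]
  -- real/imaginary parts of a complex "generalized" relation
  have hreim : ∀ (z : Fin p → ℂ) (c : ℂ), A.mulVec z = (α : ℂ) • z + c • v' →
      (C.mulVec (fun i => (z i).re) = α • (fun i => (z i).re) + c.re • v) ∧
      (C.mulVec (fun i => (z i).im) = α • (fun i => (z i).im) + c.im • v) := by
    intro z c h
    have key : ∀ i, (∑ j, C i j * (z j).re = α * (z i).re + c.re * v i) ∧
        (∑ j, C i j * (z j).im = α * (z i).im + c.im * v i) := by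
      intro i
      have hcomp := congrFun h i
      rw [hAmul] at hcomp
      have hre := congrArg Complex.re hcomp
      have him := congrArg Complex.im hcomp
      simp only [hv', Complex.re_sum, Complex.im_sum, Complex.mul_re, Complex.mul_im,
        Complex.ofReal_re, Complex.ofReal_im, Complex.add_re, Complex.add_im,
        Pi.add_apply, Pi.smul_apply, smul_eq_mul,
        zero_mul, mul_zero, sub_zero, add_zero, zero_add] at hre him
      exact ⟨hre, him⟩
    constructor
    · funext i
      simp only [Matrix.mulVec, dotProduct, Pi.add_apply, Pi.smul_apply, smul_eq_mul]
      exact (key i).1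
    · funext i
      simp only [Matrix.mulVec, dotProduct, Pi.add_apply, Pi.smul_apply, smul_eq_mul]
      exact (key i).2
  -- every complex solution of `A z = α z + c v'` has `c = 0` and `z` a multiple of `v'`
  have hckey : ∀ (z : Fin p → ℂ) (c : ℂ), A.mulVec z = (α : ℂ) • z + c • v' →
      c = 0 ∧ ∃ s : ℂ, z = s • v' := by
    intro z c h
    obtain ⟨hre, him⟩ := hreim z c h
    have hcre : c.re = 0 := pf_no_gen hp C hC α v hv heig _ _ hre
    have hcim : c.im = 0 := pf_no_gen hp C hC α v hv heig _ _ him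
    have hc0 : c = 0 := Complex.ext hcre hcim
    rw [hcre, zero_smul, add_zero] at hre
    rw [hcim, zero_smul, add_zero] at him
    obtain ⟨t, htv⟩ := pf_real_eig hp C hC α v hv heig _ hre
    obtain ⟨s, hsv⟩ := pf_real_eig hp C hC α v hv heig _ him
    refine ⟨hc0, ⟨(t : ℂ) + (s : ℂ) * Complex.I, funext fun i => ?_⟩⟩
    have h1 : (z i).re = t * v i := by simpa using congrFun htv i
    have h2 : (z i).im = s * v i := by simpa using congrFun hsv i
    apply Complex.ext <;>
      simp [hv', Complex.mul_re, Complex.mul_im, Complex.add_re, Complex.add_im, h1, h2] <;> ring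
  set f := Matrix.toLin' A with hf
  -- v' is an eigenvector
  have hv'eig : A.mulVec v' = (α : ℂ) • v' := by
    funext i
    rw [hAmul]
    have := congrFun heig i
    simp only [Matrix.mulVec, dotProduct, Pi.smul_apply, smul_eq_mul] at this
    push_cast
    rw [show (∑ j, (C i j : ℂ) * (v j : ℂ)) = ((∑ j, C i j * v j : ℝ) : ℂ) by push_cast; rfl]
    rw [this]; push_cast; simp [hv']
  have hv'ne : v' ≠ 0 := by
    intro h
    have := congrFun h ⟨0, hp⟩
    simp [hv'] at this
    exact (hv ⟨0, hp⟩).ne' this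
  constructor
  · -- the generalized eigenspace equals span of v'
    have hspan : Module.End.maxGenEigenspace f (α : ℂ) = Submodule.span ℂ {v'} := by
      apply le_antisymm
      · intro z hz
        rw [Module.End.mem_maxGenEigenspace] at hz
        obtain ⟨k, hk⟩ := hz
        -- show by induction: (f - α)^k z = 0 → (f - α) z = 0
        have main : ∀ (k : ℕ) (z : Fin p → ℂ), ((f - (α : ℂ) • 1) ^ k) z = 0 →
            (f - (α : ℂ) • 1) z = 0 := by
          intro k
          induction k with
          | zero => intro z h0; simp at h0; simp [h0]
          | succ n ih =>
            intro z h0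
            rw [pow_succ, Module.End.mul_apply] at h0
            have hy := ih _ h0
            -- y := (f - α) z satisfies A y = α y
            set y := (f - (α : ℂ) • 1) z with hy'
            have hyA : A.mulVec y = (α : ℂ) • y + (0 : ℂ) • v' := by
              have : f y = (α : ℂ) • y := by
                have : f y - (α : ℂ) • y = 0 := by
                  simpa [LinearMap.sub_apply, LinearMap.smul_apply,
                    Module.End.one_apply] using hy
                linear_combination (norm := module) this
              simpa [hf, Matrix.toLin'_apply] using this
            obtain ⟨-, s, hs⟩ := hckey y 0 hyA
            -- now z satisfies A z = α z + s v'
            have hzA : A.mulVec z = (α : ℂ) • z + s • v' := by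
              have hfz : f z - (α : ℂ) • z = s • v' := by
                rw [← hs, hy']
                simp [LinearMap.sub_apply, LinearMap.smul_apply, Module.End.one_apply]
              have : f z = (α : ℂ) • z + s • v' := by
                linear_combination (norm := module) hfz
              simpa [hf, Matrix.toLin'_apply] using this
            obtain ⟨hs0, -⟩ := hckey z s hzA
            rw [hy', hs0, zero_smul] at hs
            exact hs
        have hez := main k z hk
        have : f z = (α : ℂ) • z := by
          have : f z - (α : ℂ) • z = 0 := by
            simpa [LinearMap.sub_apply, LinearMap.smul_apply, Module.End.one_apply] using hez
          linear_combination (norm := module) this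
        have hzA : A.mulVec z = (α : ℂ) • z + (0 : ℂ) • v' := by
          simpa [hf, Matrix.toLin'_apply] using this
        obtain ⟨-, s, hs⟩ := hckey z 0 hzA
        exact Submodule.mem_span_singleton.mpr ⟨s, hs.symm⟩
      · rw [Submodule.span_le, Set.singleton_subset_iff]
        rw [SetLike.mem_coe, Module.End.mem_maxGenEigenspace]
        refine ⟨1, ?_⟩
        have hfv : f v' = (α : ℂ) • v' := by
          simpa [hf, Matrix.toLin'_apply] using hv'eig
        simp [pow_one, LinearMap.sub_apply, LinearMap.smul_apply, Module.End.one_apply, hfv]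
    rw [hspan]
    exact finrank_span_singleton hv'ne
  · -- uniqueness of the nonnegative eigenvector
    intro w β hw0 hwnn hweig
    obtain ⟨j0, hj0⟩ := Function.ne_iff.mp hw0
    have hwj0 : 0 < w j0 := lt_of_le_of_ne (hwnn j0) (Ne.symm hj0)
    have hCwpos : ∀ i, 0 < C.mulVec w i := by
      intro i
      simp only [Matrix.mulVec, dotProduct]
      exact Finset.sum_pos' (fun j _ => mul_nonneg (hC i j).le (hwnn j))
        ⟨j0, Finset.mem_univ _, mul_pos (hC i j0) hwj0⟩
    have hβw : ∀ i, 0 < β * w i := by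
      intro i
      have := hCwpos i
      rwa [hweig] at this
    have hwpos : ∀ i, 0 < w i := by
      intro i
      rcases mul_pos_iff.mp (hβw i) with ⟨-, h⟩ | ⟨-, h⟩
      · exact h
      · exact absurd (hwnn i) (not_le.mpr h)
    have hwtv : ∃ t : ℝ, 0 < t ∧ w = t • v := by
      rcases pf_comp hp C hC β α w v hwpos hv hweig heig with h | h1
      · exact h
      rcases pf_comp hp C hC α β v w hv hwpos heig hweig with ⟨s, hs, hsw⟩ | h2
      · refine ⟨s⁻¹, inv_pos.mpr hs, funext fun i => ?_⟩
        have := congrFun hsw i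
        simp only [Pi.smul_apply, smul_eq_mul] at this ⊢
        field_simp
        linarith
      · linarith
    obtain ⟨t, ht, hwt⟩ := hwtv
    have hβα : β = α := by
      have h1 : C.mulVec w = α • w := by
        rw [hwt, Matrix.mulVec_smul, heig]
        funext i; simp [Pi.smul_apply, smul_eq_mul]; ring
      have := congrFun hweig j0
      rw [congrFun h1 j0] at this
      simp only [Pi.smul_apply, smul_eq_mul] at this
      have := mul_right_cancel₀ hwj0.ne' this
      linarith
    exact ⟨hβα, t, ht, hwt⟩
end

section
/- Let p ≥ 1, let C be a p×p real matrix all of whose entries are strictly positive, let α > 0 and let v ∈ ℝ^p be a vector with all coordinates strictly positive satisfying C·v = α·v. Let K = {x ∈ ℝ^p : every coordinate of x is ≥ 0} be the nonnegative orthant. Then the intersection over all n ∈ ℕ of the images Cⁿ '' K equals the ray {t·v : t ≥ 0}. (This is the contraction statement underlying Lemma 5.4 of the paper: a periodic tight splitting sequence determines a single ray of measured laminations ∩ᵢ V(τ(i)), spanned by a Perron–Frobenius eigenvector of the associated transition matrix.) -/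
open Finset Filter

namespace PFAux

variable {p : ℕ}

noncomputable def rInf [Nonempty (Fin p)] (v z : Fin p → ℝ) : ℝ :=
  Finset.univ.inf' Finset.univ_nonempty (fun i => z i / v i)

noncomputable def rSup [Nonempty (Fin p)] (v z : Fin p → ℝ) : ℝ :=
  Finset.univ.sup' Finset.univ_nonempty (fun i => z i / v i)

variable [Nonempty (Fin p)]

lemma rInf_le (v z : Fin p → ℝ) (j : Fin p) : rInf v z ≤ z j / v j :=
  inf'_le _ (mem_univ j)

lemma le_rSup (v z : Fin p → ℝ) (j : Fin p) : z j / v j ≤ rSup v z :=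
  Finset.le_sup' (fun i => z i / v i) (mem_univ j)

lemma rInf_le_rSup (v z : Fin p → ℝ) : rInf v z ≤ rSup v z :=
  (rInf_le v z (Classical.arbitrary _)).trans (le_rSup v z _)

lemma rInf_mul_le (v z : Fin p → ℝ) (hv : ∀ i, 0 < v i) (j : Fin p) :
    rInf v z * v j ≤ z j :=
  (le_div_iff₀ (hv j)).mp (rInf_le v z j)

lemma le_rSup_mul (v z : Fin p → ℝ) (hv : ∀ i, 0 < v i) (j : Fin p) :
    z j ≤ rSup v z * v j :=
  (div_le_iff₀ (hv j)).mp (le_rSup v z j)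

lemma rInf_pos (v z : Fin p → ℝ) (hv : ∀ i, 0 < v i) (hz : ∀ i, 0 < z i) :
    0 < rInf v z :=
  (lt_inf'_iff _).mpr fun i _ => div_pos (hz i) (hv i)

lemma le_rInf' (v z : Fin p → ℝ) (hv : ∀ i, 0 < v i) (a : ℝ)
    (h : ∀ i, a * v i ≤ z i) : a ≤ rInf v z :=
  Finset.le_inf' _ _ fun i _ => (le_div_iff₀ (hv i)).mpr (h i)

lemma rSup_le' (v z : Fin p → ℝ) (hv : ∀ i, 0 < v i) (a : ℝ)
    (h : ∀ i, z i ≤ a * v i) : rSup v z ≤ a :=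
  Finset.sup'_le _ _ fun i _ => (div_le_iff₀ (hv i)).mpr (h i)

section Main

variable (C : Matrix (Fin p) (Fin p) ℝ) (α : ℝ) (v : Fin p → ℝ)

lemma row_sum (hv : ∀ i, 0 < v i) (heig : C.mulVec v = α • v) (i : Fin p) :
    ∑ j, C i j * v j = α * v i := by
  have := congrFun heig i
  simpa [Matrix.mulVec, dotProduct] using this

/-- One-step contraction estimate. -/
lemma step (hC : ∀ i j, 0 < C i j) (hα : 0 < α) (hv : ∀ i, 0 < v i)
    (heig : C.mulVec v = α • v)
    (e lam : ℝ) (he : 0 < e) (hew : ∀ i j, e * (α * v i) ≤ C i j * v j)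
    (hlam : 1 - 2 * e ≤ lam)
    (z : Fin p → ℝ) (hz : ∀ i, 0 < z i) :
    (∀ i, 0 < C.mulVec z i) ∧
    α * rInf v z ≤ rInf v (C.mulVec z) ∧
    rSup v (C.mulVec z) - rInf v (C.mulVec z)
      ≤ α * (lam * (rSup v z - rInf v z)) := by
  set m := rInf v z with hm
  set M := rSup v z with hM
  have hd0 : 0 ≤ M - m := sub_nonneg.mpr (rInf_le_rSup v z)
  have h1 : ∀ j, m * v j ≤ z j := rInf_mul_le v z hv
  have h2 : ∀ j, z j ≤ M * v j := le_rSup_mul v z hv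
  obtain ⟨j₀, -, hj₀⟩ := Finset.exists_mem_eq_inf' (univ_nonempty) (fun i => z i / v i)
  obtain ⟨j₁, -, hj₁⟩ := Finset.exists_mem_eq_sup' (univ_nonempty) (fun i => z i / v i)
  have hz₀ : z j₀ = m * v j₀ := by
    have h : m = z j₀ / v j₀ := hj₀
    rw [h, div_mul_cancel₀ _ (hv j₀).ne']
  have hz₁ : z j₁ = M * v j₁ := by
    have h : M = z j₁ / v j₁ := hj₁
    rw [h, div_mul_cancel₀ _ (hv j₁).ne']
  have hmv : ∀ i, C.mulVec z i = ∑ j, C i j * z j := by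
    intro i; simp [Matrix.mulVec, dotProduct]
  have hpos : ∀ i, 0 < C.mulVec z i := by
    intro i
    rw [hmv i]
    exact Finset.sum_pos (fun j _ => mul_pos (hC i j) (hz j)) univ_nonempty
  have hlow : ∀ i, α * (m + e * (M - m)) * v i ≤ C.mulVec z i := by
    intro i
    rw [hmv i]
    have key : C i j₁ * z j₁ + ∑ j ∈ univ.erase j₁, C i j * z j = ∑ j, C i j * z j :=
      Finset.add_sum_erase univ (fun j => C i j * z j) (mem_univ j₁)
    have h3 : ∑ j ∈ univ.erase j₁, C i j * (m * v j) ≤ ∑ j ∈ univ.erase j₁, C i j * z j :=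
      Finset.sum_le_sum fun j _ => mul_le_mul_of_nonneg_left (h1 j) (hC i j).le
    have key2 : C i j₁ * (M * v j₁) + ∑ j ∈ univ.erase j₁, C i j * (m * v j)
        = m * (α * v i) + (C i j₁ * v j₁) * (M - m) := by
      have hsum := row_sum C α v hv heig i
      have h5 : ∑ j ∈ univ.erase j₁, C i j * (m * v j)
          = m * (α * v i) - C i j₁ * (m * v j₁) := by
        have h4 : ∑ j, C i j * (m * v j) = m * ∑ j, C i j * v j := by
          rw [Finset.mul_sum]; exact Finset.sum_congr rfl fun j _ => by ring
        rw [← Finset.add_sum_erase univ (fun j => C i j * (m * v j)) (mem_univ j₁)] at h4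
        rw [hsum] at h4
        linarith
      rw [h5]; ring
    have hge : e * (α * v i) * (M - m) ≤ (C i j₁ * v j₁) * (M - m) :=
      mul_le_mul_of_nonneg_right (hew i j₁) hd0
    calc α * (m + e * (M - m)) * v i
        = m * (α * v i) + e * (α * v i) * (M - m) := by ring
      _ ≤ m * (α * v i) + (C i j₁ * v j₁) * (M - m) := by linarith
      _ = C i j₁ * (M * v j₁) + ∑ j ∈ univ.erase j₁, C i j * (m * v j) := key2.symm
      _ ≤ C i j₁ * z j₁ + ∑ j ∈ univ.erase j₁, C i j * z j := by
          rw [hz₁]; exact add_le_add le_rfl h3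
      _ = ∑ j, C i j * z j := key
  have hup : ∀ i, C.mulVec z i ≤ α * (M - e * (M - m)) * v i := by
    intro i
    rw [hmv i]
    have key : C i j₀ * z j₀ + ∑ j ∈ univ.erase j₀, C i j * z j = ∑ j, C i j * z j :=
      Finset.add_sum_erase univ (fun j => C i j * z j) (mem_univ j₀)
    have h3 : ∑ j ∈ univ.erase j₀, C i j * z j ≤ ∑ j ∈ univ.erase j₀, C i j * (M * v j) :=
      Finset.sum_le_sum fun j _ => mul_le_mul_of_nonneg_left (h2 j) (hC i j).le
    have key2 : C i j₀ * (m * v j₀) + ∑ j ∈ univ.erase j₀, C i j * (M * v j)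
        = M * (α * v i) - (C i j₀ * v j₀) * (M - m) := by
      have hsum := row_sum C α v hv heig i
      have h5 : ∑ j ∈ univ.erase j₀, C i j * (M * v j)
          = M * (α * v i) - C i j₀ * (M * v j₀) := by
        have h4 : ∑ j, C i j * (M * v j) = M * ∑ j, C i j * v j := by
          rw [Finset.mul_sum]; exact Finset.sum_congr rfl fun j _ => by ring
        rw [← Finset.add_sum_erase univ (fun j => C i j * (M * v j)) (mem_univ j₀)] at h4
        rw [hsum] at h4
        linarith
      rw [h5]; ring
    have hge : e * (α * v i) * (M - m) ≤ (C i j₀ * v j₀) * (M - m) :=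
      mul_le_mul_of_nonneg_right (hew i j₀) hd0
    calc ∑ j, C i j * z j
        = C i j₀ * z j₀ + ∑ j ∈ univ.erase j₀, C i j * z j := key.symm
      _ ≤ C i j₀ * (m * v j₀) + ∑ j ∈ univ.erase j₀, C i j * (M * v j) := by
          rw [hz₀]; exact add_le_add le_rfl h3
      _ = M * (α * v i) - (C i j₀ * v j₀) * (M - m) := key2
      _ ≤ M * (α * v i) - e * (α * v i) * (M - m) := by linarith
      _ = α * (M - e * (M - m)) * v i := by ring
  refine ⟨hpos, ?_, ?_⟩
  · have := le_rInf' v (C.mulVec z) hv _ hlow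
    have hek : α * m ≤ α * (m + e * (M - m)) := by
      nlinarith [mul_nonneg (mul_nonneg hα.le he.le) hd0]
    linarith
  · have hS := rSup_le' v (C.mulVec z) hv _ hup
    have hI := le_rInf' v (C.mulVec z) hv _ hlow
    have h5 : rSup v (C.mulVec z) - rInf v (C.mulVec z)
        ≤ α * ((1 - 2 * e) * (M - m)) := by
      have h6 : α * (M - e * (M - m)) - α * (m + e * (M - m))
          = α * ((1 - 2 * e) * (M - m)) := by ring
      linarith
    have h6 : α * ((1 - 2 * e) * (M - m)) ≤ α * (lam * (M - m)) := by
      have := mul_le_mul_of_nonneg_right hlam hd0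
      nlinarith
    linarith

/-- Iterated contraction estimate. -/
lemma iter (hC : ∀ i j, 0 < C i j) (hα : 0 < α) (hv : ∀ i, 0 < v i)
    (heig : C.mulVec v = α • v)
    (e lam : ℝ) (he : 0 < e) (hew : ∀ i j, e * (α * v i) ≤ C i j * v j)
    (hlam : 1 - 2 * e ≤ lam) (hlam0 : 0 ≤ lam)
    (n : ℕ) (z : Fin p → ℝ) (hz : ∀ i, 0 < z i) :
    (∀ i, 0 < (C ^ n).mulVec z i) ∧
    α ^ n * rInf v z ≤ rInf v ((C ^ n).mulVec z) ∧
    rSup v ((C ^ n).mulVec z) - rInf v ((C ^ n).mulVec z)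
      ≤ α ^ n * lam ^ n * (rSup v z - rInf v z) := by
  induction n generalizing z with
  | zero => simp [Matrix.one_mulVec, hz]
  | succ n ih =>
    have hstep := step C α v hC hα hv heig e lam he hew hlam z hz
    set z' := C.mulVec z with hz'
    have hrw : (C ^ (n + 1)).mulVec z = (C ^ n).mulVec z' := by
      rw [hz', Matrix.mulVec_mulVec, ← pow_succ]
    obtain ⟨hp1, hp2, hp3⟩ := ih z' hstep.1
    refine ⟨by rw [hrw]; exact hp1, ?_, ?_⟩
    · rw [hrw]
      calc α ^ (n + 1) * rInf v z = α ^ n * (α * rInf v z) := by ring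
        _ ≤ α ^ n * rInf v z' :=
            mul_le_mul_of_nonneg_left hstep.2.1 (pow_nonneg hα.le n)
        _ ≤ rInf v ((C ^ n).mulVec z') := hp2
    · rw [hrw]
      calc rSup v ((C ^ n).mulVec z') - rInf v ((C ^ n).mulVec z')
          ≤ α ^ n * lam ^ n * (rSup v z' - rInf v z') := hp3
        _ ≤ α ^ n * lam ^ n * (α * (lam * (rSup v z - rInf v z))) := by
            refine mul_le_mul_of_nonneg_left hstep.2.2 ?_
            positivity
        _ = α ^ (n + 1) * lam ^ (n + 1) * (rSup v z - rInf v z) := by ring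

end Main

end PFAux

open PFAux Finset Filter

/-- **Projective contraction of the nonnegative orthant.** If `C` is a real
matrix with strictly positive entries, `α > 0` and `v` is a strictly positive
vector with `C v = α v`, then the intersection over all `n` of the images of
the nonnegative orthant `K` under the matrix powers `Cⁿ` is exactly the ray
spanned by `v`. -/
theorem positive_matrix_iInter_images_orthant_eq_ray
    (p : ℕ) (hp : 1 ≤ p) (C : Matrix (Fin p) (Fin p) ℝ)
    (hC : ∀ i j, 0 < C i j)
    (α : ℝ) (hα : 0 < α) (v : Fin p → ℝ) (hv : ∀ i, 0 < v i)
    (heig : C.mulVec v = α • v)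
    (K : Set (Fin p → ℝ)) (hK : K = {x | ∀ i, 0 ≤ x i}) :
    (⋂ n : ℕ, (fun x => (C ^ n).mulVec x) '' K) =
      {x | ∃ t : ℝ, 0 ≤ t ∧ x = t • v} := by
  haveI : Nonempty (Fin p) := Fin.pos_iff_nonempty.mp hp
  have heign : ∀ n : ℕ, (C ^ n).mulVec v = α ^ n • v := by
    intro n
    induction n with
    | zero => simp [Matrix.one_mulVec]
    | succ n ih =>
      rw [pow_succ', ← Matrix.mulVec_mulVec, ih, Matrix.mulVec_smul, heig,
        smul_smul, ← pow_succ]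
  ext x
  simp only [Set.mem_iInter, Set.mem_setOf_eq]
  constructor
  · intro hx
    by_cases hx0 : x = 0
    · exact ⟨0, le_refl 0, by simp [hx0]⟩
    haveI : Nonempty (Fin p × Fin p) := inferInstance
    set e : ℝ := Finset.univ.inf' Finset.univ_nonempty
      (fun ij : Fin p × Fin p => C ij.1 ij.2 * v ij.2 / (α * v ij.1)) with hedef
    have he : 0 < e :=
      (Finset.lt_inf'_iff _).mpr fun ij _ =>
        div_pos (mul_pos (hC _ _) (hv _)) (mul_pos hα (hv _))
    have hew : ∀ i j, e * (α * v i) ≤ C i j * v j := by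
      intro i j
      have h := Finset.inf'_le (f := fun ij : Fin p × Fin p =>
        C ij.1 ij.2 * v ij.2 / (α * v ij.1)) (Finset.mem_univ (i, j))
      rw [← hedef] at h
      exact (le_div_iff₀ (mul_pos hα (hv i))).mp h
    set lam : ℝ := max (1 - 2 * e) 0 with hlamdef
    have hlam : 1 - 2 * e ≤ lam := le_max_left _ _
    have hlam0 : 0 ≤ lam := le_max_right _ _
    have hlam1 : lam < 1 := max_lt (by linarith) one_pos
    set cmax : ℝ := Finset.univ.sup' Finset.univ_nonempty
      (fun ij : Fin p × Fin p => C ij.1 ij.2) with hcmax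
    set cmin : ℝ := Finset.univ.inf' Finset.univ_nonempty
      (fun ij : Fin p × Fin p => C ij.1 ij.2) with hcmin
    set vmax : ℝ := Finset.univ.sup' Finset.univ_nonempty v with hvmax
    set vmin : ℝ := Finset.univ.inf' Finset.univ_nonempty v with hvmin
    have hcmin0 : 0 < cmin :=
      (Finset.lt_inf'_iff _).mpr fun ij _ => hC ij.1 ij.2
    have hvmin0 : 0 < vmin := (Finset.lt_inf'_iff _).mpr fun i _ => hv i
    have hcm : ∀ i j, C i j ≤ cmax := fun i j =>
      Finset.le_sup' (f := fun ij : Fin p × Fin p => C ij.1 ij.2)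
        (Finset.mem_univ (i, j))
    have hcm' : ∀ i j, cmin ≤ C i j := fun i j =>
      Finset.inf'_le (f := fun ij : Fin p × Fin p => C ij.1 ij.2)
        (Finset.mem_univ (i, j))
    have hvm : ∀ i, v i ≤ vmax := fun i => Finset.le_sup' v (Finset.mem_univ i)
    have hvm' : ∀ i, vmin ≤ v i := fun i => Finset.inf'_le v (Finset.mem_univ i)
    obtain ⟨i0⟩ := (inferInstance : Nonempty (Fin p))
    have hcc : cmin ≤ cmax := (hcm' i0 i0).trans (hcm i0 i0)
    have hvv : vmin ≤ vmax := (hvm' i0).trans (hvm i0)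
    have hcmax0 : 0 < cmax := lt_of_lt_of_le hcmin0 hcc
    have hvmax0 : 0 < vmax := lt_of_lt_of_le hvmin0 hvv
    set Bc : ℝ := (cmax * vmax) / (cmin * vmin) with hBcdef
    have hBc0 : 0 ≤ Bc :=
      (div_pos (mul_pos hcmax0 hvmax0) (mul_pos hcmin0 hvmin0)).le
    -- positivity after one application of C
    have hCpos : ∀ y : Fin p → ℝ, (∀ i, 0 ≤ y i) → y ≠ 0 →
        ∀ i, 0 < C.mulVec y i := by
      intro y hy hy0 i
      obtain ⟨j, hj⟩ := Function.ne_iff.mp hy0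
      have : C.mulVec y i = ∑ j, C i j * y j := by
        simp [Matrix.mulVec, dotProduct]
      rw [this]
      exact Finset.sum_pos' (fun j _ => mul_nonneg (hC i j).le (hy j))
        ⟨j, Finset.mem_univ j, mul_pos (hC i j) (lt_of_le_of_ne (hy j) (Ne.symm hj))⟩
    -- uniform oscillation bound after one application of C
    have hbound : ∀ y : Fin p → ℝ, (∀ i, 0 ≤ y i) → y ≠ 0 →
        rSup v (C.mulVec y) - rInf v (C.mulVec y) ≤ Bc * rInf v (C.mulVec y) := by
      intro y hy hy0
      set T : ℝ := ∑ j, y j with hT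
      have hT0 : 0 < T := by
        obtain ⟨j, hj⟩ := Function.ne_iff.mp hy0
        exact Finset.sum_pos' (fun j _ => hy j)
          ⟨j, Finset.mem_univ j, lt_of_le_of_ne (hy j) (Ne.symm hj)⟩
      have hmv : ∀ i, C.mulVec y i = ∑ j, C i j * y j := by
        intro i; simp [Matrix.mulVec, dotProduct]
      have hup : ∀ i, C.mulVec y i ≤ cmax * T := by
        intro i
        rw [hmv i, hT, Finset.mul_sum]
        exact Finset.sum_le_sum fun j _ => mul_le_mul_of_nonneg_right (hcm i j) (hy j)
      have hlo : ∀ i, cmin * T ≤ C.mulVec y i := by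
        intro i
        rw [hmv i, hT, Finset.mul_sum]
        exact Finset.sum_le_sum fun j _ => mul_le_mul_of_nonneg_right (hcm' i j) (hy j)
      have hS : rSup v (C.mulVec y) ≤ cmax * T / vmin := by
        apply Finset.sup'_le
        intro i _
        exact div_le_div₀ (by positivity) (hup i) hvmin0 (hvm' i)
      have hI : cmin * T / vmax ≤ rInf v (C.mulVec y) := by
        apply Finset.le_inf'
        intro i _
        exact div_le_div₀ ((mul_pos hcmin0 hT0).le.trans (hlo i)) (hlo i) (hv i) (hvm i)
      have hkey : cmax * T / vmin = Bc * (cmin * T / vmax) := by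
        rw [hBcdef]
        field_simp
      have hI0 : 0 ≤ rInf v (C.mulVec y) :=
        le_trans (div_pos (mul_pos hcmin0 hT0) hvmax0).le hI
      have h7 : Bc * (cmin * T / vmax) ≤ Bc * rInf v (C.mulVec y) :=
        mul_le_mul_of_nonneg_left hI hBc0
      linarith [hS, hkey ▸ h7]
    -- key estimate for x
    have hkey : ∀ n : ℕ, rSup v x - rInf v x ≤ lam ^ n * (Bc * rInf v x) := by
      intro n
      obtain ⟨y, hyK, hyx⟩ := hx (n + 1)
      rw [hK] at hyK
      have hy0 : y ≠ 0 := by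
        rintro rfl
        simp only at hyx
        rw [Matrix.mulVec_zero] at hyx
        exact hx0 hyx.symm
      simp only at hyx
      set z := C.mulVec y with hzdef
      have hzpos : ∀ i, 0 < z i := hCpos y hyK hy0
      have hxz : (C ^ n).mulVec z = x := by
        rw [hzdef, Matrix.mulVec_mulVec, ← pow_succ, hyx]
      obtain ⟨h1, h2, h3⟩ := iter C α v hC hα hv heig e lam he hew hlam hlam0 n z hzpos
      rw [hxz] at h2 h3
      have hb := hbound y hyK hy0
      rw [← hzdef] at hb
      calc rSup v x - rInf v x
          ≤ α ^ n * lam ^ n * (rSup v z - rInf v z) := h3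
        _ ≤ α ^ n * lam ^ n * (Bc * rInf v z) := by
            refine mul_le_mul_of_nonneg_left hb ?_
            positivity
        _ = lam ^ n * Bc * (α ^ n * rInf v z) := by ring
        _ ≤ lam ^ n * Bc * rInf v x := by
            refine mul_le_mul_of_nonneg_left h2 ?_
            positivity
        _ = lam ^ n * (Bc * rInf v x) := by ring
    have hten : Tendsto (fun n : ℕ => lam ^ n * (Bc * rInf v x)) atTop (nhds 0) := by
      simpa using (tendsto_pow_atTop_nhds_zero_of_lt_one hlam0 hlam1).mul_const
        (Bc * rInf v x)
    have hle : rSup v x - rInf v x ≤ 0 := ge_of_tendsto' hten hkey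
    have heq : rSup v x = rInf v x :=
      le_antisymm (by linarith) (rInf_le_rSup v x)
    have hxpos : ∀ i, 0 < x i := by
      obtain ⟨y, hyK, hyx⟩ := hx 1
      rw [hK] at hyK
      have hy0 : y ≠ 0 := by
        rintro rfl
        simp only at hyx
        rw [Matrix.mulVec_zero] at hyx
        exact hx0 hyx.symm
      simp only [pow_one] at hyx
      rw [← hyx]
      exact hCpos y hyK hy0
    refine ⟨rInf v x, (rInf_pos v x hv hxpos).le, ?_⟩
    funext i
    have hle1 := rInf_le v x i
    have hle2 := le_rSup v x i
    have : x i / v i = rInf v x := le_antisymm (heq ▸ hle2) hle1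
    have hx_i : x i = rInf v x * v i := by
      rw [← this, div_mul_cancel₀ _ (hv i).ne']
    simpa [Pi.smul_apply, smul_eq_mul] using hx_i
  · rintro ⟨t, ht, rfl⟩
    intro n
    refine ⟨(t / α ^ n) • v, ?_, ?_⟩
    · rw [hK]
      intro i
      have h : (0 : ℝ) ≤ t / α ^ n := div_nonneg ht (pow_nonneg hα.le n)
      exact mul_nonneg h (hv i).le
    · simp only
      rw [Matrix.mulVec_smul, heign n, smul_smul, div_mul_cancel₀]
      exact (pow_pos hα n).ne'
end
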